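/- Let T_σ = {A ⊑ ∃σ.M ⊓ X_0} ∪ {X_i ⊑ ∃r.X_{i+1} ⊓ ∃s.X_{i+1} : 0 ≤ i < n} for σ ∈ {r,s}ⁿ, and let S_N = {T_σ : σ ∈ {r,s}ⁿ}. For every DL-Lite concept inclusion B ⊑ D over the signature of the T_σ (where B is a basic concept, i.e., a concept name or ∃ρ.⊤ for a role ρ, and D is an arbitrary concept expression possibly with inverse roles): either T_σ ⊨ B ⊑ D for every T_σ ∈ S_N, or there is at most one T_σ ∈ S_N such that T_σ ⊨ B ⊑ D. -/

import Mathlib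

/-- EL concept expressions over concept names `C` and (possibly inverse)
roles `R`. -/
inductive ELC (C R : Type) : Type where
  | top : ELC C R
  | cn : C → ELC C R
  | conj : ELC C R → ELC C R → ELC C R
  | ex : R → ELC C R → ELC C R

/-- Roles: role names and inverse roles. -/
inductive Role (R : Type) : Type where
  | nm : R → Role R
  | inv : R → Role R

/-- An interpretation. -/
structure Interp (C R : Type) where
  dom : Type
  cname : C → Set dom
  rname : R → Set (dom × dom)

/-- Semantics of roles; inverse roles denote converse relations. -/
def Interp.roleSem {C R : Type} (I : Interp C R) : Role R → Set (I.dom × I.dom)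
  | .nm r => I.rname r
  | .inv r => {p | (p.2, p.1) ∈ I.rname r}

/-- Semantics of concept expressions (with roles possibly inverse). -/
def Interp.semI {C R : Type} (I : Interp C R) : ELC C (Role R) → Set I.dom
  | .top => Set.univ
  | .cn A => I.cname A
  | .conj c d => I.semI c ∩ I.semI d
  | .ex ρ c => {x | ∃ y, (x, y) ∈ I.roleSem ρ ∧ y ∈ I.semI c}

/-- The pairwise distinct concept names `A`, `M`, `X_0, X_1, …`. -/
inductive CN : Type where
  | A : CN
  | M : CN
  | X : ℕ → CN

/-- The two distinct role names `r` and `s`. -/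
inductive RN : Type where
  | r : RN
  | s : RN

/-- `∃σ.C` for a word `σ` over `{r,s}`: nested existential restrictions. -/
def exSeq (w : List RN) (c : ELC CN (Role RN)) : ELC CN (Role RN) :=
  w.foldr (fun ρ acc => .ex (.nm ρ) acc) c

/-- The TBox `T_0 = {X_i ⊑ ∃r.X_{i+1} ⊓ ∃s.X_{i+1} : 0 ≤ i < n}`. -/
def T0 (n : ℕ) : List (ELC CN (Role RN) × ELC CN (Role RN)) :=
  (List.range n).map fun i =>
    (.cn (.X i), .conj (.ex (.nm .r) (.cn (.X (i + 1)))) (.ex (.nm .s) (.cn (.X (i + 1)))))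

/-- The TBox `T_σ = {A ⊑ ∃σ.M ⊓ X_0} ∪ T_0`. -/
def Tsig (n : ℕ) (σ : List RN) : List (ELC CN (Role RN) × ELC CN (Role RN)) :=
  (.cn .A, .conj (exSeq σ (.cn .M)) (.cn (.X 0))) :: T0 n

/-- `T ⊨ c ⊑ d`: the inclusion holds in every model of the TBox `T`. -/
def Entails (T : List (ELC CN (Role RN) × ELC CN (Role RN)))
    (c d : ELC CN (Role RN)) : Prop :=
  ∀ I : Interp CN RN, (∀ p ∈ T, I.semI p.1 ⊆ I.semI p.2) → I.semI c ⊆ I.semI d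

/-- A basic concept: a concept name or `∃ρ.⊤` for a role `ρ`. -/
def IsBasic (b : ELC CN (Role RN)) : Prop :=
  (∃ a, b = .cn a) ∨ ∃ ρ, b = .ex ρ .top

/-- The concept names allowed in the signature `{A, M, X_0, …, X_n, r, s}`. -/
def goodCN (n : ℕ) : CN → Prop
  | .A => True
  | .M => True
  | .X i => i ≤ n

/-- The concept uses only concept names from the signature of `T_σ`. -/
def InSig (n : ℕ) : ELC CN (Role RN) → Prop
  | .top => True
  | .cn a => goodCN n a
  | .conj c d => InSig n c ∧ InSig n d
  | .ex _ c => InSig n c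

/-!
If `B` is not the concept name `A`, erasing `A` from a model of `T_σ'` gives a model of every
`T_σ` in which `B` keeps and `D` can only lose instances, so whether `T_σ ⊨ B ⊑ D` does not
depend on `σ`.

For `B = A`, `T_σ ⊨ A ⊑ D` holds iff `D` holds at the root of the canonical model `canon n σ`: a
full binary `r`/`s`-tree of depth `n` with a `σ`-path from the root to an `M`-node. If this holds
for `σ₁ ≠ σ₂`, the pair of roots satisfies `D` in the product of the two canonical models. The pairs
of nodes reached by the same word form a union of connected components of the product which
contains the pair of roots but not the `M`-pair (the words `σ₁`, `σ₂` differ), and it maps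
homomorphically into the tree part of any `canon n σ`; so `D` holds at the root of every
`canon n σ`.
-/

namespace Interp

variable {C R : Type}

def Models (I : Interp C R) (T : List (ELC C (Role R) × ELC C (Role R))) : Prop :=
  ∀ p ∈ T, I.semI p.1 ⊆ I.semI p.2

theorem mem_semI_of_hom_on {I J : Interp C R} (S : Set I.dom)
    (hS : ∀ r x y, (x, y) ∈ I.rname r → (x ∈ S ↔ y ∈ S)) (f : I.dom → J.dom)
    (hc : ∀ a, ∀ x ∈ S, x ∈ I.cname a → f x ∈ J.cname a)
    (hr : ∀ r, ∀ x ∈ S, ∀ y, (x, y) ∈ I.rname r → (f x, f y) ∈ J.rname r)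
    (c : ELC C (Role R)) : ∀ x ∈ S, x ∈ I.semI c → f x ∈ J.semI c := by
  induction c with
  | top => exact fun _ _ _ => trivial
  | cn a => exact hc a
  | conj c d ihc ihd => exact fun x hxS hx => ⟨ihc x hxS hx.1, ihd x hxS hx.2⟩
  | ex ρ c ih =>
    rintro x hxS ⟨y, hxy, hy⟩
    cases ρ with
    | nm r => exact ⟨f y, hr r x hxS y hxy, ih y ((hS r x y hxy).1 hxS) hy⟩
    | inv r =>
      have hyS : y ∈ S := (hS r y x hxy).2 hxS
      exact ⟨f y, hr r y hyS x hxy, ih y hyS hy⟩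

theorem mem_semI_of_hom {I J : Interp C R} (f : I.dom → J.dom)
    (hc : ∀ a x, x ∈ I.cname a → f x ∈ J.cname a)
    (hr : ∀ r x y, (x, y) ∈ I.rname r → (f x, f y) ∈ J.rname r)
    (c : ELC C (Role R)) {x : I.dom} (hx : x ∈ I.semI c) : f x ∈ J.semI c :=
  mem_semI_of_hom_on Set.univ (fun _ _ _ _ => Iff.rfl) f (fun a x _ => hc a x)
    (fun r x _ => hr r x) c x trivial hx

def prod (I J : Interp C R) : Interp C R where
  dom := I.dom × J.dom
  cname a := {p | p.1 ∈ I.cname a ∧ p.2 ∈ J.cname a}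
  rname r := {p | (p.1.1, p.2.1) ∈ I.rname r ∧ (p.1.2, p.2.2) ∈ J.rname r}

theorem mk_mem_semI_prod {I J : Interp C R} (c : ELC C (Role R)) {x : I.dom} {y : J.dom}
    (hx : x ∈ I.semI c) (hy : y ∈ J.semI c) : (x, y) ∈ (I.prod J).semI c := by
  induction c generalizing x y with
  | top => trivial
  | cn a => exact ⟨hx, hy⟩
  | conj c d ihc ihd => exact ⟨ihc hx.1 hy.1, ihd hx.2 hy.2⟩
  | ex ρ c ih =>
    obtain ⟨x', hxx', hx'⟩ := hx
    obtain ⟨y', hyy', hy'⟩ := hy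
    refine ⟨(x', y'), ?_, ih hx' hy'⟩
    cases ρ <;> exact ⟨hxx', hyy'⟩

end Interp

open Interp

theorem mem_semI_exSeq_iff {I : Interp CN RN} {w : List RN} {c : ELC CN (Role RN)} {x : I.dom} :
    x ∈ I.semI (exSeq w c) ↔ ∃ g : ℕ → I.dom, g 0 = x ∧
      (∀ i ρ, w[i]? = some ρ → (g i, g (i + 1)) ∈ I.rname ρ) ∧ g w.length ∈ I.semI c := by
  induction w generalizing x with
  | nil =>
    refine ⟨fun hx => ⟨fun _ => x, rfl, by simp, hx⟩, ?_⟩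
    rintro ⟨g, rfl, -, hg⟩
    exact hg
  | cons ρ w ih =>
    constructor
    · rintro ⟨y, hxy, hy⟩
      obtain ⟨g, rfl, hg, hgc⟩ := ih.1 hy
      refine ⟨fun i => Nat.casesOn i x g, rfl, ?_, hgc⟩
      rintro (_ | i) ρ' h
      · cases Option.some.inj h
        exact hxy
      · exact hg i ρ' h
    · rintro ⟨g, rfl, hg, hgc⟩
      exact ⟨g 1, hg 0 ρ rfl, ih.2 ⟨fun i => g (i + 1), rfl, fun i => hg (i + 1), hgc⟩⟩

theorem models_Tsig_iff {I : Interp CN RN} {n : ℕ} {σ : List RN} :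
    I.Models (Tsig n σ) ↔
      I.cname .A ⊆ I.semI (exSeq σ (.cn .M)) ∩ I.cname (.X 0) ∧ I.Models (T0 n) :=
  List.forall_mem_cons

theorem models_T0_iff {I : Interp CN RN} {n : ℕ} :
    I.Models (T0 n) ↔ ∀ i < n, ∀ x ∈ I.cname (.X i), ∀ ρ : RN,
      ∃ y, (x, y) ∈ I.rname ρ ∧ y ∈ I.cname (.X (i + 1)) := by
  simp only [Models, T0, List.forall_mem_map, List.mem_range]
  refine forall₂_congr fun i _ => ⟨fun h x hx ρ => ?_, fun h x hx => ⟨h x hx .r, h x hx .s⟩⟩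
  cases ρ
  exacts [(h hx).1, (h hx).2]

def eraseA (I : Interp CN RN) : Interp CN RN where
  dom := I.dom
  cname
    | .A => ∅
    | a => I.cname a
  rname := I.rname

theorem semI_eraseA_subset (I : Interp CN RN) (c : ELC CN (Role RN)) :
    (eraseA I).semI c ⊆ I.semI c := fun _ =>
  mem_semI_of_hom (I := eraseA I) (J := I) id (by rintro (_ | _ | _) x hx; exacts [hx.elim, hx, hx])
    (fun _ _ _ h => h) c

theorem eraseA_models_Tsig {I : Interp CN RN} {n : ℕ} (hI : I.Models (T0 n)) (σ : List RN) :
    (eraseA I).Models (Tsig n σ) :=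
  models_Tsig_iff.2 ⟨fun _ hx => hx.elim, models_T0_iff.2 ((models_T0_iff (I := I)).1 hI)⟩

theorem mem_semI_eraseA_of_isBasic {I : Interp CN RN} {B : ELC CN (Role RN)} (hB : IsBasic B)
    (hBA : B ≠ .cn .A) {x : I.dom} (hx : x ∈ I.semI B) : x ∈ (eraseA I).semI B := by
  rcases hB with ⟨_ | _ | _, rfl⟩ | ⟨ρ, rfl⟩
  · exact absurd rfl hBA
  · exact hx
  · exact hx
  · obtain ⟨y, hxy, -⟩ := hx
    exact ⟨y, by cases ρ <;> exact hxy, trivial⟩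

theorem entails_Tsig_of_ne_A {n : ℕ} {B D : ELC CN (Role RN)} (hB : IsBasic B)
    (hBA : B ≠ .cn .A) {σ : List RN} (h : Entails (Tsig n σ) B D) (σ' : List RN) :
    Entails (Tsig n σ') B D := fun I hI _ hx =>
  semI_eraseA_subset I D <|
    h _ (eraseA_models_Tsig (models_Tsig_iff.1 hI).2 σ) (mem_semI_eraseA_of_isBasic hB hBA hx)

def pathNode : ℕ → List RN ⊕ ℕ
  | 0 => .inl []
  | j + 1 => .inr j

/-- `.inl w` is the node of the binary tree reached from the root `.inl []` by the reversed word
`w`; `pathNode i` is the node at depth `i` of the `σ`-path, which starts at the same root. -/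
def canon (n : ℕ) (σ : List RN) : Interp CN RN where
  dom := List RN ⊕ ℕ
  cname
    | .A => {.inl []}
    | .M => {pathNode n}
    | .X i => {x | ∃ w : List RN, x = .inl w ∧ w.length = i ∧ i ≤ n}
  rname ρ := {p | (∃ w : List RN, w.length < n ∧ p = (.inl w, .inl (ρ :: w))) ∨
    ∃ i, σ[i]? = some ρ ∧ p = (pathNode i, pathNode (i + 1))}

/-- The word read along the way from the root to a node of `canon n σ`, last letter first. -/
def word (σ : List RN) : List RN ⊕ ℕ → List RN
  | .inl w => w
  | .inr j => (σ.take (j + 1)).reverse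

theorem word_pathNode (σ : List RN) (i : ℕ) : word σ (pathNode i) = (σ.take i).reverse := by
  cases i <;> simp [word, pathNode]

theorem word_of_mem_canon_rname {n : ℕ} {σ : List RN} (hσ : σ.length = n) {ρ : RN}
    {x y : List RN ⊕ ℕ} (h : (x, y) ∈ (canon n σ).rname ρ) :
    word σ y = ρ :: word σ x ∧ (word σ x).length < n := by
  rcases h with ⟨w, hw, h⟩ | ⟨i, hi, h⟩ <;> obtain ⟨rfl, rfl⟩ := Prod.mk.inj h
  · exact ⟨rfl, hw⟩
  · have hin : i < σ.length := (List.getElem?_eq_some_iff.1 hi).1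
    rw [word_pathNode, word_pathNode, List.take_add_one, hi, List.length_reverse,
      List.length_take]
    exact ⟨by simp, by omega⟩

theorem canon_models {n : ℕ} {σ : List RN} (hσ : σ.length = n) :
    (canon n σ).Models (Tsig n σ) := by
  refine models_Tsig_iff.2 ⟨?_, models_T0_iff.2 ?_⟩
  · rintro _ rfl
    exact ⟨mem_semI_exSeq_iff.2 ⟨pathNode, rfl, fun i ρ h => Or.inr ⟨i, h, rfl⟩, hσ ▸ rfl⟩,
      [], rfl, rfl, Nat.zero_le n⟩
  · rintro i hi _ ⟨w, rfl, rfl, -⟩ ρ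
    exact ⟨.inl (ρ :: w), Or.inl ⟨w, hi, rfl⟩, ρ :: w, rfl, rfl, hi⟩

/-- Meaningful only where the chosen successors exist: in models of `T0 n`, for `w.length < n`. -/
noncomputable def unravel (I : Interp CN RN) (x : I.dom) : List RN → I.dom
  | [] => x
  | ρ :: w =>
    have : Nonempty I.dom := ⟨x⟩
    Classical.epsilon fun y =>
      (unravel I x w, y) ∈ I.rname ρ ∧ y ∈ I.cname (.X (w.length + 1))

section Unravel

variable {I : Interp CN RN} {n : ℕ} {x : I.dom}

theorem unravel_cons_spec (hI : I.Models (T0 n)) {w : List RN} (hw : w.length < n)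
    (hwX : unravel I x w ∈ I.cname (.X w.length)) (ρ : RN) :
    (unravel I x w, unravel I x (ρ :: w)) ∈ I.rname ρ ∧
      unravel I x (ρ :: w) ∈ I.cname (.X (w.length + 1)) :=
  Classical.epsilon_spec (models_T0_iff.1 hI _ hw _ hwX ρ)

theorem unravel_mem_X (hI : I.Models (T0 n)) (hx : x ∈ I.cname (.X 0)) :
    ∀ w : List RN, w.length ≤ n → unravel I x w ∈ I.cname (.X w.length)
  | [], _ => hx
  | ρ :: w, hw => (unravel_cons_spec hI hw (unravel_mem_X hI hx w (by simp at hw; omega)) ρ).2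

end Unravel

theorem entails_A_of_root_mem_canon {n : ℕ} {σ : List RN} (hσ : σ.length = n)
    {D : ELC CN (Role RN)} (hD : (.inl [] : (canon n σ).dom) ∈ (canon n σ).semI D) :
    Entails (Tsig n σ) (.cn .A) D := by
  intro I hI x hxA
  obtain ⟨hAx, hT0⟩ := models_Tsig_iff.1 hI
  obtain ⟨hpath, hX0⟩ := hAx hxA
  obtain ⟨g, rfl, hg, hgM⟩ := mem_semI_exSeq_iff.1 hpath
  let f : List RN ⊕ ℕ → I.dom := Sum.elim (unravel I (g 0)) fun j => g (j + 1)
  have hf : ∀ i, f (pathNode i) = g i := by rintro (_ | _) <;> rfl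
  refine mem_semI_of_hom f ?_ ?_ D hD
  · rintro (_ | _ | i) y hy
    · rw [hy]
      exact hxA
    · rw [hy, hf, ← hσ]
      exact hgM
    · obtain ⟨w, rfl, rfl, hw⟩ := hy
      exact unravel_mem_X hT0 hX0 w hw
  · rintro ρ y z (⟨w, hw, h⟩ | ⟨i, hi, h⟩) <;> obtain ⟨rfl, rfl⟩ := Prod.mk.inj h
    · exact (unravel_cons_spec hT0 hw (unravel_mem_X hT0 hX0 w hw.le) ρ).1
    · rw [hf, hf]
      exact hg i ρ hi

theorem entails_A_iff_root_mem_canon {n : ℕ} {σ : List RN} (hσ : σ.length = n)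
    (D : ELC CN (Role RN)) :
    Entails (Tsig n σ) (.cn .A) D ↔ (.inl [] : (canon n σ).dom) ∈ (canon n σ).semI D :=
  ⟨fun h => h _ (canon_models hσ) rfl, entails_A_of_root_mem_canon hσ⟩

theorem root_mem_canon_of_ne {n : ℕ} {σ₁ σ₂ : List RN} (h₁ : σ₁.length = n)
    (h₂ : σ₂.length = n) (hne : σ₁ ≠ σ₂) {D : ELC CN (Role RN)}
    (hD₁ : (.inl [] : (canon n σ₁).dom) ∈ (canon n σ₁).semI D)
    (hD₂ : (.inl [] : (canon n σ₂).dom) ∈ (canon n σ₂).semI D) (σ : List RN) :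
    (.inl [] : (canon n σ).dom) ∈ (canon n σ).semI D := by
  let S : Set ((canon n σ₁).prod (canon n σ₂)).dom := {p | word σ₁ p.1 = word σ₂ p.2}
  have hS : ∀ ρ p q, (p, q) ∈ ((canon n σ₁).prod (canon n σ₂)).rname ρ → (p ∈ S ↔ q ∈ S) := by
    rintro ρ p q ⟨hpq₁, hpq₂⟩
    change word σ₁ p.1 = word σ₂ p.2 ↔ word σ₁ q.1 = word σ₂ q.2
    rw [(word_of_mem_canon_rname (x := p.1) (y := q.1) h₁ hpq₁).1,
      (word_of_mem_canon_rname (x := p.2) (y := q.2) h₂ hpq₂).1, List.cons_inj_right]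
  refine mem_semI_of_hom_on (J := canon n σ) S hS (fun p => Sum.inl (word σ₁ p.1)) ?_ ?_ D
    (.inl [], .inl []) rfl (mk_mem_semI_prod D hD₁ hD₂)
  · rintro (_ | _ | i) p hp ⟨hp₁, hp₂⟩
    · exact congrArg (fun y => Sum.inl (word σ₁ y)) hp₁
    · have hword : word σ₁ p.1 = word σ₂ p.2 := hp
      rw [hp₁, hp₂, word_pathNode, word_pathNode, ← h₁, List.take_length, h₁, ← h₂,
        List.take_length] at hword
      exact absurd (List.reverse_injective hword) hne
    · obtain ⟨w, hw, rfl, hi⟩ := hp₁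
      exact ⟨w, by rw [hw]; rfl, rfl, hi⟩
  · rintro ρ p - q ⟨hpq, -⟩
    obtain ⟨hq, hlt⟩ := word_of_mem_canon_rname (x := p.1) (y := q.1) h₁ hpq
    exact Or.inl ⟨word σ₁ p.1, hlt, by rw [hq]; rfl⟩

theorem dllite_ci_dichotomy_general (n : ℕ) (B D : ELC CN (Role RN))
    (hB : IsBasic B) :
    (∀ σ : List RN, σ.length = n → Entails (Tsig n σ) B D) ∨
    (∀ σ₁ σ₂ : List RN, σ₁.length = n → σ₂.length = n →
      Entails (Tsig n σ₁) B D → Entails (Tsig n σ₂) B D → σ₁ = σ₂) := by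
  by_cases hBA : B = .cn .A
  · subst hBA
    refine or_iff_not_imp_right.2 fun hmany => ?_
    push Not at hmany
    obtain ⟨σ₁, σ₂, h₁, h₂, e₁, e₂, hne⟩ := hmany
    intro σ hσ
    rw [entails_A_iff_root_mem_canon h₁] at e₁
    rw [entails_A_iff_root_mem_canon h₂] at e₂
    exact (entails_A_iff_root_mem_canon hσ D).2 (root_mem_canon_of_ne h₁ h₂ hne e₁ e₂ σ)
  · by_cases hsome : ∃ σ, Entails (Tsig n σ) B D
    · obtain ⟨σ₀, h⟩ := hsome
      exact Or.inl fun σ _ => entails_Tsig_of_ne_A hB hBA h σ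
    · exact Or.inr fun σ₁ _ _ _ h₁ _ => absurd ⟨σ₁, h₁⟩ hsome

/-- for every DL-Lite CI `B ⊑ D` over the signature of the
`T_σ` (with `B` basic), either `T_σ ⊨ B ⊑ D` for every `σ`, or there is at
most one `σ` with `T_σ ⊨ B ⊑ D`. -/
theorem dllite_ci_dichotomy (n : ℕ) (B D : ELC CN (Role RN))
    (hB : IsBasic B) (hsB : InSig n B) (hsD : InSig n D) :
    (∀ σ : List RN, σ.length = n → Entails (Tsig n σ) B D) ∨
    (∀ σ₁ σ₂ : List RN, σ₁.length = n → σ₂.length = n →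
      Entails (Tsig n σ₁) B D → Entails (Tsig n σ₂) B D → σ₁ = σ₂) :=
  dllite_ci_dichotomy_general n B D hB
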